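/- Let a > 0 and define p^a(t) := (a/√(2π t³)) e^{−a²/(2t)} for t > 0. Then for every β > 0 there exist δ > 0 and Δ > 0 such that for all 0 < ε < Δ one has ∫₀^δ | p^a(t + ε) − p^a(t) | dt ≤ β ε. -/

import Mathlib

open MeasureTheory Real Filter Set

noncomputable section

/-- Density of the first hitting time of level `a` by a standard Brownian motion. -/
def hitDensity (a t : ℝ) : ℝ :=
  a / Real.sqrt (2 * Real.pi * t ^ 3) * Real.exp (-(a ^ 2) / (2 * t))

def hitDeriv (a t : ℝ) : ℝ :=
  a / Real.sqrt (2 * Real.pi) *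
    (Real.exp (-(a ^ 2) / (2 * t)) * (a ^ 2 / (2 * t ^ 2)) * t ^ (-(3:ℝ)/2)
      + Real.exp (-(a ^ 2) / (2 * t)) * ((-(3:ℝ)/2) * t ^ (-(3:ℝ)/2 - 1)))

lemma hitDensity_eq (a : ℝ) {t : ℝ} (ht : 0 < t) :
    hitDensity a t = a / Real.sqrt (2 * Real.pi) *
      (Real.exp (-(a ^ 2) / (2 * t)) * t ^ (-(3:ℝ)/2)) := by
  have h3 : Real.sqrt (t ^ 3) = t ^ ((3:ℝ)/2) := by
    rw [Real.sqrt_eq_rpow, ← Real.rpow_natCast t 3, ← Real.rpow_mul ht.le]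
    norm_num
  have hs : Real.sqrt (2 * Real.pi * t ^ 3) = Real.sqrt (2 * Real.pi) * t ^ ((3:ℝ)/2) := by
    rw [Real.sqrt_mul (by positivity), h3]
  have hne : t ^ ((3:ℝ)/2) ≠ 0 := by positivity
  have hneg : t ^ (-(3:ℝ)/2) = (t ^ ((3:ℝ)/2))⁻¹ := by
    rw [← Real.rpow_neg ht.le]; norm_num
  have hπ : Real.sqrt (2 * Real.pi) ≠ 0 := by positivity
  rw [hitDensity, hs, hneg]
  field_simp

lemma hasDerivAt_hitDensity (a : ℝ) {t : ℝ} (ht : 0 < t) :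
    HasDerivAt (hitDensity a) (hitDeriv a t) t := by
  have h1 : HasDerivAt (fun t : ℝ => -(a ^ 2) / (2 * t)) (a ^ 2 / (2 * t ^ 2)) t := by
    have : HasDerivAt (fun t : ℝ => 2 * t) 2 t := by
      simpa using (hasDerivAt_id t).const_mul 2
    have h := (hasDerivAt_const t (-(a ^ 2))).div this (by positivity)
    refine h.congr_deriv ?_
    field_simp
    ring
  have h2 : HasDerivAt (fun t : ℝ => Real.exp (-(a ^ 2) / (2 * t)))
      (Real.exp (-(a ^ 2) / (2 * t)) * (a ^ 2 / (2 * t ^ 2))) t := h1.exp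
  have h3 : HasDerivAt (fun t : ℝ => t ^ (-(3:ℝ)/2))
      ((-(3:ℝ)/2) * t ^ (-(3:ℝ)/2 - 1)) t :=
    Real.hasDerivAt_rpow_const (Or.inl ht.ne')
  have h4 := ((h2.mul h3).const_mul (a / Real.sqrt (2 * Real.pi)))
  have heq : hitDensity a =ᶠ[nhds t]
      (fun t => a / Real.sqrt (2 * Real.pi) *
        (Real.exp (-(a ^ 2) / (2 * t)) * t ^ (-(3:ℝ)/2))) := by
    filter_upwards [Ioi_mem_nhds ht] with x hx
    exact hitDensity_eq a hx
  refine HasDerivAt.congr_of_eventuallyEq ?_ heq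
  exact h4

lemma tendsto_term (c r : ℝ) (hc : 0 < c) :
    Tendsto (fun t : ℝ => Real.exp (-c / t) * t ^ (-r)) (nhdsWithin 0 (Set.Ioi 0)) (nhds 0) := by
  have h0 := tendsto_rpow_mul_exp_neg_mul_atTop_nhds_zero r c hc
  have h := h0.comp tendsto_inv_nhdsGT_zero
  refine h.congr' ?_
  filter_upwards [self_mem_nhdsWithin] with t (ht : 0 < t)
  simp only [Function.comp]
  rw [mul_comm, Real.inv_rpow ht.le, Real.rpow_neg ht.le, div_eq_mul_inv]

lemma tendsto_hitDeriv (a : ℝ) (ha : 0 < a) :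
    Tendsto (hitDeriv a) (nhdsWithin 0 (Set.Ioi 0)) (nhds 0) := by
  set K := a / Real.sqrt (2 * Real.pi) with hK
  set c := a ^ 2 / 2 with hc
  have hcpos : 0 < c := by positivity
  have L : Tendsto (fun t : ℝ => K * (c * (Real.exp (-c / t) * t ^ (-(7:ℝ)/2)))
      + K * ((-(3:ℝ)/2) * (Real.exp (-c / t) * t ^ (-(5:ℝ)/2))))
      (nhdsWithin 0 (Set.Ioi 0)) (nhds 0) := by
    have h1 := ((tendsto_term c (7/2) hcpos).const_mul c).const_mul K
    have h2 := ((tendsto_term c (5/2) hcpos).const_mul ((-(3:ℝ)/2))).const_mul K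
    have := h1.add h2
    norm_num at this ⊢
    convert this using 2
  refine L.congr' ?_
  filter_upwards [self_mem_nhdsWithin] with t (ht : (0:ℝ) < t)
  have hexp : -c / t = -(a ^ 2) / (2 * t) := by rw [hc]; ring
  have h7 : t ^ (-(7:ℝ)/2) = t ^ (-(3:ℝ)/2) / t ^ 2 := by
    rw [eq_div_iff (by positivity), ← Real.rpow_natCast t 2, ← Real.rpow_add ht]
    norm_num
  have h5 : t ^ (-(3:ℝ)/2 - 1) = t ^ (-(5:ℝ)/2) := by norm_num
  rw [hitDeriv, hexp, ← hK, h5, h7]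
  have ht2 : (t:ℝ) ^ 2 ≠ 0 := by positivity
  field_simp
  ring

/-- `∫₀^δ |p^a(t+ε) − p^a(t)| dt ≤ β ε` for suitable `δ` and all sufficiently small `ε > 0`. -/
theorem stmt16 (a : ℝ) (ha : 0 < a) (β : ℝ) (hβ : 0 < β) :
    ∃ δ > (0 : ℝ), ∃ Δ > (0 : ℝ), ∀ ε : ℝ, 0 < ε → ε < Δ →
      (∫ t in Set.Ioo (0 : ℝ) δ, |hitDensity a (t + ε) - hitDensity a t|) ≤ β * ε := by
  have hL := tendsto_hitDeriv a ha
  have hev : ∀ᶠ t in nhdsWithin 0 (Set.Ioi 0), |hitDeriv a t| < β := by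
    have := Metric.tendsto_nhds.mp hL β hβ
    filter_upwards [this] with t ht
    simpa [Real.dist_eq] using ht
  rw [eventually_nhdsWithin_iff, Metric.eventually_nhds_iff] at hev
  obtain ⟨η, hη, hball⟩ := hev
  refine ⟨min (η/2) 1, by positivity, min (η/2) 1, by positivity, fun ε hε hεΔ => ?_⟩
  set δ := min (η/2) 1 with hδ
  have hδpos : 0 < δ := by positivity
  have hδη : δ ≤ η / 2 := min_le_left _ _
  have hδ1 : δ ≤ 1 := min_le_right _ _
  -- pointwise Lipschitz bound on Ioo 0 η
  have key : ∀ t ∈ Set.Ioo (0:ℝ) δ, |hitDensity a (t + ε) - hitDensity a t| ≤ β * ε := by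
    intro t htm
    obtain ⟨ht0, htδ⟩ := htm
    have hmem1 : t ∈ Set.Ioo (0:ℝ) η := ⟨ht0, by linarith⟩
    have hmem2 : t + ε ∈ Set.Ioo (0:ℝ) η := ⟨by linarith, by linarith⟩
    have hf : ∀ x ∈ Set.Ioo (0:ℝ) η,
        HasDerivWithinAt (hitDensity a) (hitDeriv a x) (Set.Ioo (0:ℝ) η) x :=
      fun x hx => (hasDerivAt_hitDensity a hx.1).hasDerivWithinAt
    have hbound : ∀ x ∈ Set.Ioo (0:ℝ) η, ‖hitDeriv a x‖ ≤ β := by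
      intro x hx
      have : dist x 0 < η := by
        rw [Real.dist_eq, sub_zero, abs_of_pos hx.1]; exact hx.2
      exact (hball this hx.1).le
    have := (convex_Ioo (0:ℝ) η).norm_image_sub_le_of_norm_hasDerivWithin_le
      hf hbound hmem1 hmem2
    simpa [Real.norm_eq_abs, abs_of_pos hε] using this
  -- integral bound
  have hfin : volume (Set.Ioo (0:ℝ) δ) < ⊤ := measure_Ioo_lt_top
  have hnorm := norm_setIntegral_le_of_norm_le_const (μ := volume)
    (f := fun t => |hitDensity a (t + ε) - hitDensity a t|) (C := β * ε)
    hfin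
    (fun x hx => by rw [Real.norm_eq_abs, abs_abs]; exact key x hx)
  have hvol : (volume (Set.Ioo (0:ℝ) δ)).toReal = δ := by
    rw [Real.volume_Ioo, ENNReal.toReal_ofReal (by linarith)]
    ring
  calc (∫ t in Set.Ioo (0 : ℝ) δ, |hitDensity a (t + ε) - hitDensity a t|)
      ≤ ‖∫ t in Set.Ioo (0 : ℝ) δ, |hitDensity a (t + ε) - hitDensity a t|‖ :=
        le_abs_self _
    _ ≤ (β * ε) * (volume (Set.Ioo (0:ℝ) δ)).toReal := hnorm
    _ = (β * ε) * δ := by rw [hvol]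
    _ ≤ β * ε := mul_le_of_le_one_right (by positivity) hδ1
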